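/- Let σ be the strategy induced by an RRD Mealy machine in the one-state game, let h be a history consistent with σ such that the probability under σ of never playing a after h is positive and σ(h(bs)^k)(a) > 0 for all k ≥ 0. Then there exists k_0 such that the support of the memory distribution strictly decreases when action a is played after h(bs)^{k_0+1}: some memory state with positive probability after h(bs)^{k_0}b assigns zero next-move probability to a. -/

import Mathlib

open Filter
open scoped Classical

/-- A stochastic Mealy machine for the one-state game with two actions
(`true` = action a, `false` = action b). -/
structure OneMealy (n : ℕ) where
  init : Fin n → ℝ
  next : Fin n → Bool → ℝ
  up : Fin n → Bool → Fin n → ℝ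

def Proper {n : ℕ} (N : OneMealy n) : Prop :=
  (∀ m, 0 ≤ N.init m) ∧ (∑ m, N.init m) = 1 ∧
  (∀ m c, 0 ≤ N.next m c) ∧ (∀ m, ∑ c, N.next m c = 1) ∧
  (∀ m c m', 0 ≤ N.up m c m') ∧ ∀ m c, ∑ m', N.up m c m' = 1

def IsDirac {α : Type} (μ : α → ℝ) : Prop := ∃ x, ∀ y, μ y = if y = x then 1 else 0

def DetInit {n : ℕ} (N : OneMealy n) : Prop := IsDirac N.init
def DetNext {n : ℕ} (N : OneMealy n) : Prop := ∀ m, IsDirac (N.next m)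
def DetUp {n : ℕ} (N : OneMealy n) : Prop := ∀ m c, IsDirac (N.up m c)

/-- Bayesian update of the memory distribution upon playing action `c`. -/
noncomputable def ostep {n : ℕ} (N : OneMealy n) (μ : Fin n → ℝ) (c : Bool) :
    Fin n → ℝ :=
  if (∑ m', μ m' * N.next m' c) = 0 then fun m => ∑ m', μ m' * N.up m' c m
  else fun m => (∑ m', μ m' * N.up m' c m * N.next m' c) / (∑ m', μ m' * N.next m' c)

/-- Distribution over memory states after the word `w` of actions. -/
noncomputable def omemDist {n : ℕ} (N : OneMealy n) (w : List Bool) : Fin n → ℝ :=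
  w.foldl (ostep N) N.init

/-- The strategy induced by the machine. -/
noncomputable def oStrat {n : ℕ} (N : OneMealy n) (w : List Bool) (c : Bool) : ℝ :=
  ∑ m, omemDist N w m * N.next m c

/-- Probability of the cylinder of the finite action word `l` under strategy `σ`. -/
def cylProb (σ : List Bool → Bool → ℝ) (l : List Bool) : ℝ :=
  ∏ i ∈ Finset.range l.length, σ (l.take i) (l.getD i false)

/-- Outcome equivalence in the one-state game: identical cylinder probabilities. -/
noncomputable def OEquiv {n k : ℕ} (N : OneMealy n) (B : OneMealy k) : Prop :=
  ∀ w : List Bool, cylProb (oStrat N) w = cylProb (oStrat B) w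

/-- Consistency of an action word with a strategy. -/
def consistentW (σ : List Bool → Bool → ℝ) (w : List Bool) : Prop :=
  ∀ i < w.length, 0 < σ (w.take i) (w.getD i false)

/-!
Suppose every memory state that is reachable with positive probability after `h b^(k+1)` plays
`a` with positive probability. Those probabilities take finitely many values, so they are
bounded below by some `ε > 0`; hence `b` is played with probability at most `1 - ε` at every
round after the first, and the probability of playing `b` forever after `h` is `0`.
-/

open Topology

def IsProbVec {n : ℕ} (μ : Fin n → ℝ) : Prop :=
  (∀ m, 0 ≤ μ m) ∧ ∑ m, μ m = 1

lemma exists_pos_forall_le_of_pos {α : Type*} [Fintype α] (g : α → ℝ) :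
    ∃ ε > 0, ∀ a, 0 < g a → ε ≤ g a := by
  set T := insert 1 ((Finset.univ.filter fun a => 0 < g a).image g)
  refine ⟨T.min' (Finset.insert_nonempty _ _), ?_, fun a ha => T.min'_le _ ?_⟩
  · rw [gt_iff_lt, Finset.lt_min'_iff]
    simp only [T, Finset.mem_insert, Finset.mem_image, Finset.mem_filter, Finset.mem_univ,
      true_and]
    rintro y (rfl | ⟨a, ha, rfl⟩)
    exacts [one_pos, ha]
  · simp only [T, Finset.mem_insert, Finset.mem_image, Finset.mem_filter, Finset.mem_univ,
      true_and]
    exact Or.inr ⟨a, ha, rfl⟩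

lemma tendsto_prod_range_zero_of_le {f : ℕ → ℝ} {r : ℝ} (hr : r < 1) (hf0 : ∀ k, 0 ≤ f k)
    (hfr : ∀ k, f k ≤ r) : Tendsto (fun k => ∏ l ∈ Finset.range k, f l) atTop (𝓝 0) := by
  have hr0 : 0 ≤ r := (hf0 0).trans (hfr 0)
  refine squeeze_zero (fun k => Finset.prod_nonneg fun l _ => hf0 l) (fun k => ?_)
    (tendsto_pow_atTop_nhds_zero_of_lt_one hr0 hr)
  calc ∏ l ∈ Finset.range k, f l ≤ ∏ _l ∈ Finset.range k, r :=
        Finset.prod_le_prod (fun l _ => hf0 l) (fun l _ => hfr l)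
    _ = r ^ k := by rw [Finset.prod_const, Finset.card_range]

section Machine

variable {n : ℕ} {N : OneMealy n}

lemma isProbVec_ostep (hN : Proper N) {μ : Fin n → ℝ} (hμ : IsProbVec μ) (c : Bool) :
    IsProbVec (ostep N μ c) := by
  obtain ⟨-, -, hnext0, -, hup0, hup1⟩ := hN
  obtain ⟨hμ0, hμ1⟩ := hμ
  have hD0 : 0 ≤ ∑ m', μ m' * N.next m' c :=
    Finset.sum_nonneg fun m' _ => mul_nonneg (hμ0 m') (hnext0 m' c)
  unfold ostep
  split_ifs with hD
  · refine ⟨fun m => Finset.sum_nonneg fun m' _ => mul_nonneg (hμ0 m') (hup0 m' c m), ?_⟩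
    rw [Finset.sum_comm]
    simp only [← Finset.mul_sum, hup1, mul_one, hμ1]
  · refine ⟨fun m => div_nonneg (Finset.sum_nonneg fun m' _ =>
      mul_nonneg (mul_nonneg (hμ0 m') (hup0 m' c m)) (hnext0 m' c)) hD0, ?_⟩
    rw [← Finset.sum_div, Finset.sum_comm, div_eq_one_iff_eq hD]
    refine Finset.sum_congr rfl fun m' _ => ?_
    rw [← Finset.sum_mul, ← Finset.mul_sum, hup1, mul_one]

lemma omemDist_append_singleton (w : List Bool) (c : Bool) :
    omemDist N (w ++ [c]) = ostep N (omemDist N w) c := by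
  simp [omemDist, List.foldl_append]

lemma isProbVec_omemDist (hN : Proper N) (w : List Bool) : IsProbVec (omemDist N w) := by
  induction w using List.reverseRecOn with
  | nil => exact ⟨hN.1, hN.2.1⟩
  | append_singleton w c ih =>
    rw [omemDist_append_singleton]
    exact isProbVec_ostep hN ih c

lemma oStrat_true_add_false (hN : Proper N) (w : List Bool) :
    oStrat N w true + oStrat N w false = 1 := by
  have hnext1 (m : Fin n) : N.next m true + N.next m false = 1 := by
    simpa [Fintype.sum_bool] using hN.2.2.2.1 m
  simp only [oStrat, ← Finset.sum_add_distrib, ← mul_add, hnext1, mul_one]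
  exact (isProbVec_omemDist hN w).2

lemma oStrat_nonneg (hN : Proper N) (w : List Bool) (c : Bool) : 0 ≤ oStrat N w c :=
  Finset.sum_nonneg fun m _ => mul_nonneg ((isProbVec_omemDist hN w).1 m) (hN.2.2.1 m c)

lemma le_oStrat_of_forall_support (hN : Proper N) {w : List Bool} {c : Bool} {ε : ℝ}
    (hε : ∀ m, 0 < omemDist N w m → ε ≤ N.next m c) : ε ≤ oStrat N w c := by
  obtain ⟨hμ0, hμ1⟩ := isProbVec_omemDist hN w
  calc ε = ∑ m, omemDist N w m * ε := by rw [← Finset.sum_mul, hμ1, one_mul]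
    _ ≤ oStrat N w c := Finset.sum_le_sum fun m _ => by
        rcases (hμ0 m).eq_or_lt with hm | hm
        · simp [← hm]
        · exact mul_le_mul_of_nonneg_left (hε m hm) (hμ0 m)

end Machine

theorem rrd_forced_support_decrease_general (n : ℕ) (N : OneMealy n)
    (hN : Proper N)
    (h : List Bool)
    (L : ℝ) (hL : 0 < L)
    (hlim : Filter.Tendsto
      (fun k => ∏ l ∈ Finset.range k, oStrat N (h ++ List.replicate l false) false)
      Filter.atTop (nhds L)) :
    ∃ (k0 : ℕ) (m : Fin n),
      0 < omemDist N (h ++ List.replicate (k0 + 1) false) m ∧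
      N.next m true = 0 := by
  by_contra! hsupp
  obtain ⟨ε, hε, hεle⟩ := exists_pos_forall_le_of_pos fun m => N.next m true
  set b : ℕ → ℝ := fun k => oStrat N (h ++ List.replicate k false) false
  have hb_le (k : ℕ) : b (k + 1) ≤ 1 - ε := by
    have ha : ε ≤ oStrat N (h ++ List.replicate (k + 1) false) true :=
      le_oStrat_of_forall_support hN fun m hm =>
        hεle m ((hN.2.2.1 m true).lt_of_ne' (hsupp k m hm))
    linarith [oStrat_true_add_false hN (h ++ List.replicate (k + 1) false)]
  have htail : Tendsto (fun k => ∏ l ∈ Finset.range k, b (l + 1)) atTop (𝓝 0) :=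
    tendsto_prod_range_zero_of_le (by linarith) (fun k => oStrat_nonneg hN _ _) hb_le
  have hshift : Tendsto (fun k => b 0 * ∏ l ∈ Finset.range k, b (l + 1)) atTop (𝓝 L) := by
    simpa only [Function.comp_def, Finset.prod_range_succ', mul_comm] using
      hlim.comp (tendsto_add_atTop_nat 1)
  have hL0 : L = 0 := tendsto_nhds_unique hshift (by simpa using htail.const_mul (b 0))
  exact hL.ne' hL0

/-- Forced strict support decrease for RRD machines: if, after a consistent
history `h`, the probability of never playing `a` again is positive (the limit
`L` of the products of `b`-probabilities is positive) while `a` has positive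
probability at every subsequent round, then at some round `k0` some memory
state with positive probability after `h(bs)^{k0}b` assigns next-move
probability `0` to `a` (so playing `a` there strictly decreases the support).
Here `true` = a, `false` = b, and `h(bs)^k` corresponds to the word
`h ++ replicate k false`. -/
theorem rrd_forced_support_decrease (n : ℕ) (N : OneMealy n)
    (hN : Proper N) (hup : DetUp N)
    (h : List Bool) (hcons : consistentW (oStrat N) h)
    (L : ℝ) (hL : 0 < L)
    (hlim : Filter.Tendsto
      (fun k => ∏ l ∈ Finset.range k, oStrat N (h ++ List.replicate l false) false)
      Filter.atTop (nhds L))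
    (hposa : ∀ k : ℕ, 0 < oStrat N (h ++ List.replicate k false) true) :
    ∃ (k0 : ℕ) (m : Fin n),
      0 < omemDist N (h ++ List.replicate (k0 + 1) false) m ∧
      N.next m true = 0 :=
  rrd_forced_support_decrease_general n N hN h L hL hlim
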